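/- arXiv:1602.04450 — 4 statements merged into one kernel-verified Lean document; each statement's English description precedes it below -/
import Mathlib

section
/- Let (Ω, 𝓕, P) be a probability space, let A and I be finite nonempty sets, let δ ∈ (0,1), and let (π_n)_{n≥1} be positive reals with Σ_{n≥1} π_n^{−1} = 1 and |A|·|I|·π_n ≥ δ for all n. Set β_n := 2·log(|A|·|I|·π_n/δ). Suppose that for each n ≥ 1, a ∈ A and i ∈ I, X_{n,a,i} : Ω → ℝ is a random variable whose law is the Gaussian measure with mean μ_{n−1}(a,i) ∈ ℝ and variance σ_{n−1}(a,i)², where σ_{n−1}(a,i) > 0. Then with probability at least 1 − δ the following holds simultaneously for all n ≥ 1, a ∈ A and i ∈ I: |X_{n,a,i} − μ_{n−1}(a,i)| ≤ β_n^{1/2}·σ_{n−1}(a,i). -/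
/-!
Shifting a Gaussian density by `d` towards its mean costs at most a factor `exp (-d² / (2v))`:
`(x + d - μ)² ≥ (x - μ)² + d²` as soon as `x - μ` and `d` have the same sign. Moving the two
tails `{x - μ > c}` and `{x - μ < -c}` onto the two half-lines on either side of `μ`, whose total
mass is at most `1`, gives `P(|X - μ| > c) ≤ exp (-c² / (2v))` without the factor `2` of the
Chernoff bound. With the choice of `β n`, each of the events `|X n a i - m n a i| > √(β n) s n a i`
then has probability at most `δ / (|A| |I| pn n)`, and the union bound over `n`, `a`, `i` sums
these to `δ`.
-/

open MeasureTheory ProbabilityTheory Real Set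
open scoped ENNReal NNReal

namespace ProbabilityTheory

variable {μ : ℝ} {v : ℝ≥0}

lemma gaussianPDFReal_add_le {x d : ℝ} (hdx : 0 ≤ d * (x - μ)) :
    gaussianPDFReal μ v (x + d) ≤ exp (-d ^ 2 / (2 * v)) * gaussianPDFReal μ v x := by
  simp only [gaussianPDFReal]
  rw [mul_left_comm, ← exp_add, ← add_div]
  gcongr
  nlinarith

lemma gaussianReal_preimage_sub_le (hv : v ≠ 0) {d : ℝ} {s : Set ℝ} (hs : MeasurableSet s)
    (hds : ∀ x ∈ s, 0 ≤ d * (x - μ)) :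
    gaussianReal μ v ((· - d) ⁻¹' s) ≤
      ENNReal.ofReal (exp (-d ^ 2 / (2 * v))) * gaussianReal μ v s := by
  rw [← Measure.map_apply (measurable_sub_const d) hs, gaussianReal_map_sub_const,
    gaussianReal_apply _ hv, gaussianReal_apply _ hv,
    ← lintegral_const_mul _ (measurable_gaussianPDF _ _)]
  refine setLIntegral_mono (by fun_prop) fun x hx => ?_
  rw [gaussianPDF, gaussianPDF, ← ENNReal.ofReal_mul (exp_pos _).le, ← gaussianPDFReal_add]
  exact ENNReal.ofReal_le_ofReal (gaussianPDFReal_add_le (hds x hx))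

lemma gaussianReal_lt_abs_sub_le (hv : v ≠ 0) {c : ℝ} (hc : 0 ≤ c) :
    gaussianReal μ v {x | c < |x - μ|} ≤ ENNReal.ofReal (exp (-c ^ 2 / (2 * v))) := by
  set E := ENNReal.ofReal (exp (-c ^ 2 / (2 * v)))
  have h_split : {x | c < |x - μ|} ⊆ (· - c) ⁻¹' Ioi μ ∪ (· - -c) ⁻¹' Iio μ := by
    intro x hx
    rcases lt_abs.mp (show c < |x - μ| from hx) with h | h
    · exact Or.inl (show μ < x - c by linarith)
    · exact Or.inr (show x - -c < μ by linarith)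
  have h_right := gaussianReal_preimage_sub_le (μ := μ) hv measurableSet_Ioi
    fun x (hx : μ < x) => mul_nonneg hc (sub_pos.mpr hx).le
  have h_left := gaussianReal_preimage_sub_le (μ := μ) hv measurableSet_Iio
    fun x (hx : x < μ) => mul_nonneg_of_nonpos_of_nonpos (neg_nonpos.mpr hc) (sub_neg.mpr hx).le
  rw [neg_sq] at h_left
  calc gaussianReal μ v {x | c < |x - μ|}
      ≤ gaussianReal μ v ((· - c) ⁻¹' Ioi μ) + gaussianReal μ v ((· - -c) ⁻¹' Iio μ) :=
        (measure_mono h_split).trans (measure_union_le _ _)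
    _ ≤ E * gaussianReal μ v (Ioi μ) + E * gaussianReal μ v (Iio μ) := add_le_add h_right h_left
    _ = E * gaussianReal μ v (Ioi μ ∪ Iio μ) := by
        rw [measure_union Ioi_disjoint_Iio_same measurableSet_Iio, mul_add]
    _ ≤ E := mul_le_of_le_one_right' prob_le_one

end ProbabilityTheory

section

variable {Ω : Type*} [MeasurableSpace Ω] {P : Measure Ω}

lemma measure_sqrt_mul_lt_abs_sub_le {X : Ω → ℝ} (hX : Measurable X) {m σ : ℝ} (hσ : 0 < σ)
    (hXlaw : P.map X = gaussianReal m (σ.toNNReal ^ 2)) (β : ℝ) :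
    P {ω | √β * σ < |X ω - m|} ≤ ENNReal.ofReal (exp (-β / 2)) := by
  have hv : σ.toNNReal ^ 2 ≠ 0 := pow_ne_zero _ (Real.toNNReal_pos.mpr hσ).ne'
  have h_law : P {ω | √β * σ < |X ω - m|} =
      gaussianReal m (σ.toNNReal ^ 2) {x | √β * σ < |x - m|} := by
    rw [← hXlaw, Measure.map_apply hX (measurableSet_lt measurable_const (by fun_prop))]
    rfl
  rw [h_law]
  refine (gaussianReal_lt_abs_sub_le hv (by positivity)).trans (ENNReal.ofReal_le_ofReal ?_)
  rw [NNReal.coe_pow, Real.coe_toNNReal _ hσ.le, mul_pow, sq_sqrt']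
  have h_cancel : -(max β 0 * σ ^ 2) / (2 * σ ^ 2) = -max β 0 / 2 := by field_simp
  rw [h_cancel]
  gcongr
  exact le_max_left β 0

lemma measure_iUnion_le_card_mul_tsum {ι A I : Type*} [Countable ι] [Fintype A] [Fintype I]
    {B : ι → A → I → Set Ω} {ε : ι → ℝ} (hε : ∀ n, 0 ≤ ε n) (hε_sum : Summable ε)
    (hB : ∀ n a i, P (B n a i) ≤ ENNReal.ofReal (ε n)) :
    P (⋃ n, ⋃ a, ⋃ i, B n a i) ≤
      ENNReal.ofReal (Fintype.card A * Fintype.card I * ∑' n, ε n) := by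
  calc P (⋃ n, ⋃ a, ⋃ i, B n a i) ≤ ∑' n, ∑ a, ∑ i, P (B n a i) :=
        (measure_iUnion_le _).trans <| ENNReal.tsum_le_tsum fun n =>
          (measure_iUnion_fintype_le _ _).trans <|
            Finset.sum_le_sum fun a _ => measure_iUnion_fintype_le _ _
    _ ≤ ∑' n, ∑ _a : A, ∑ _i : I, ENNReal.ofReal (ε n) := by
        gcongr with n a _ i
        exact hB n a i
    _ = ∑' n, ENNReal.ofReal (Fintype.card A * Fintype.card I * ε n) := by
        refine tsum_congr fun n => ?_
        simp only [Finset.sum_const, Finset.card_univ, nsmul_eq_mul]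
        rw [← ENNReal.ofReal_natCast, ← ENNReal.ofReal_natCast, ← mul_assoc,
          ← ENNReal.ofReal_mul (by positivity), ← ENNReal.ofReal_mul (by positivity)]
    _ = ENNReal.ofReal (Fintype.card A * Fintype.card I * ∑' n, ε n) := by
        rw [← ENNReal.ofReal_tsum_of_nonneg (fun n => by have := hε n; positivity)
          (hε_sum.mul_left _), tsum_mul_left]

lemma ofReal_one_sub_le_of_measure_compl_le [IsProbabilityMeasure P] {G : Set Ω} {δ : ℝ}
    (hδ : 0 ≤ δ) (hG : P Gᶜ ≤ ENNReal.ofReal δ) : ENNReal.ofReal (1 - δ) ≤ P G := by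
  rw [ENNReal.ofReal_sub _ hδ, ENNReal.ofReal_one, tsub_le_iff_right]
  calc 1 = P (G ∪ Gᶜ) := by rw [union_compl_self, measure_univ]
    _ ≤ P G + P Gᶜ := measure_union_le _ _
    _ ≤ P G + ENNReal.ofReal δ := by gcongr

end

theorem safeopt_confidence_intervals_general
    {Ω : Type*} [MeasurableSpace Ω] (P : Measure Ω) [IsProbabilityMeasure P]
    {A I : Type*} [Fintype A] [Fintype I] [Nonempty A] [Nonempty I]
    (δ : ℝ) (hδ : δ ∈ Set.Ioo (0 : ℝ) 1)
    (pn : ℕ → ℝ) (hpnpos : ∀ n ≥ 1, 0 < pn n)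
    (hpnsum : ∑' n : ℕ, (pn (n + 1))⁻¹ = 1)
    (β : ℕ → ℝ)
    (hβ : ∀ n ≥ 1, β n =
      2 * Real.log ((Fintype.card A : ℝ) * (Fintype.card I : ℝ) * pn n / δ))
    (m : ℕ → A → I → ℝ) (s : ℕ → A → I → ℝ) (hs : ∀ n a i, 0 < s n a i)
    (X : ℕ → A → I → Ω → ℝ) (hXmeas : ∀ n a i, Measurable (X n a i))
    (hXlaw : ∀ n, 1 ≤ n → ∀ (a : A) (i : I),
      P.map (X n a i) = gaussianReal (m n a i) ((s n a i).toNNReal ^ 2)) :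
    ENNReal.ofReal (1 - δ) ≤
      P {ω : Ω | ∀ n, 1 ≤ n → ∀ (a : A) (i : I),
        |X n a i ω - m n a i| ≤ Real.sqrt (β n) * s n a i} := by
  set K : ℝ := (Fintype.card A : ℝ) * (Fintype.card I : ℝ)
  have hK : 0 < K := by positivity
  have h_summable : Summable fun n => (pn (n + 1))⁻¹ := by
    by_contra h
    exact zero_ne_one (tsum_eq_zero_of_not_summable h ▸ hpnsum)
  have h_bad : ∀ n a i, P {ω | √(β (n + 1)) * s (n + 1) a i < |X (n + 1) a i ω - m (n + 1) a i|}
      ≤ ENNReal.ofReal (δ / K * (pn (n + 1))⁻¹) := fun n a i => by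
    have hn := Nat.le_add_left 1 n
    have := hpnpos _ hn
    refine (measure_sqrt_mul_lt_abs_sub_le (hXmeas _ a i) (hs _ a i) (hXlaw _ hn a i) _).trans_eq ?_
    rw [hβ _ hn, neg_div, mul_div_cancel_left₀ _ two_ne_zero, exp_neg,
      exp_log (by positivity [hδ.1])]
    congr 1
    field_simp
  have h_compl : {ω | ∀ n, 1 ≤ n → ∀ (a : A) (i : I), |X n a i ω - m n a i| ≤ √(β n) * s n a i}ᶜ ⊆
      ⋃ n, ⋃ a, ⋃ i, {ω | √(β (n + 1)) * s (n + 1) a i < |X (n + 1) a i ω - m (n + 1) a i|} := by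
    intro ω hω
    simp only [mem_compl_iff, mem_ofPred_eq, not_forall, not_le] at hω
    obtain ⟨n, hn, a, i, h⟩ := hω
    obtain ⟨k, rfl⟩ := Nat.exists_eq_add_of_le' hn
    exact mem_iUnion.mpr ⟨k, mem_iUnion.mpr ⟨a, mem_iUnion.mpr ⟨i, h⟩⟩⟩
  have hε : ∀ n, 0 ≤ δ / K * (pn (n + 1))⁻¹ := fun n => by
    have := hpnpos (n + 1) (Nat.le_add_left 1 n)
    positivity [hδ.1]
  refine ofReal_one_sub_le_of_measure_compl_le hδ.1.le ((measure_mono h_compl).trans ?_)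
  refine (measure_iUnion_le_card_mul_tsum hε (h_summable.mul_left _) h_bad).trans_eq ?_
  rw [tsum_mul_left, hpnsum, mul_one, mul_div_cancel₀ _ hK.ne']

/-- **Lemma 1 (marginal-Gaussian form).** With `β n = 2 log(|A|·|I|·pn n / δ)`, where the
`pn n` are positive with `∑_{n ≥ 1} pn n⁻¹ = 1` and `|A|·|I|·pn n ≥ δ`, random variables
`X n a i` distributed as Gaussians with mean `m n a i` and standard deviation `s n a i > 0`
satisfy `|X n a i - m n a i| ≤ √(β n) · s n a i` jointly for all `n ≥ 1`, `a ∈ A`, `i ∈ I`,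
with probability at least `1 - δ`. -/
theorem safeopt_confidence_intervals
    {Ω : Type*} [MeasurableSpace Ω] (P : Measure Ω) [IsProbabilityMeasure P]
    {A I : Type*} [Fintype A] [Fintype I] [Nonempty A] [Nonempty I]
    (δ : ℝ) (hδ : δ ∈ Set.Ioo (0 : ℝ) 1)
    (pn : ℕ → ℝ) (hpnpos : ∀ n ≥ 1, 0 < pn n)
    (hpnsum : ∑' n : ℕ, (pn (n + 1))⁻¹ = 1)
    (hpnδ : ∀ n ≥ 1, δ ≤ (Fintype.card A : ℝ) * (Fintype.card I : ℝ) * pn n)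
    (β : ℕ → ℝ)
    (hβ : ∀ n ≥ 1, β n =
      2 * Real.log ((Fintype.card A : ℝ) * (Fintype.card I : ℝ) * pn n / δ))
    (m : ℕ → A → I → ℝ) (s : ℕ → A → I → ℝ) (hs : ∀ n a i, 0 < s n a i)
    (X : ℕ → A → I → Ω → ℝ) (hXmeas : ∀ n a i, Measurable (X n a i))
    (hXlaw : ∀ n, 1 ≤ n → ∀ (a : A) (i : I),
      P.map (X n a i) = gaussianReal (m n a i) ((s n a i).toNNReal ^ 2)) :
    ENNReal.ofReal (1 - δ) ≤
      P {ω : Ω | ∀ n, 1 ≤ n → ∀ (a : A) (i : I),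
        |X n a i ω - m n a i| ≤ Real.sqrt (β n) * s n a i} :=
  safeopt_confidence_intervals_general P δ hδ pn hpnpos hpnsum β hβ m s hs X hXmeas hXlaw
end

section
/- Let A be a finite subset of ℝ^d, let L ≥ 0, and suppose each g_i : ℝ^d → ℝ (i = 1,…,q) is L-Lipschitz with respect to ‖·‖. Let S₀ ⊆ A satisfy g_i(a) ≥ 0 for all a ∈ S₀ and all i, and for each n ≥ 1 let l_n^i : A → ℝ satisfy l_n^i(a) ≤ g_i(a) for all a ∈ A and all i. Then for every n ≥ 1, every a ∈ S_n and every i, g_i(a) ≥ 0, where S_n are the Lipschitz-based safe sets. -/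
/-- The Lipschitz-based safe sets of SafeOpt-MC:
`S_0 = S₀` and `S_n = ⋂_{i=1}^q ⋃_{a ∈ S_{n-1}} {a' ∈ A : l_n^i(a) - L‖a - a'‖ ≥ 0}`. -/
def safeSet {d q : ℕ} (A : Set (EuclideanSpace ℝ (Fin d)))
    (l : ℕ → Fin q → EuclideanSpace ℝ (Fin d) → ℝ) (L : ℝ)
    (S₀ : Set (EuclideanSpace ℝ (Fin d))) : ℕ → Set (EuclideanSpace ℝ (Fin d))
  | 0 => S₀
  | n + 1 => ⋂ i : Fin q, ⋃ a ∈ safeSet A l L S₀ n,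
      {a' ∈ A | l (n + 1) i a - L * ‖a - a'‖ ≥ 0}

/-- **Deterministic core of Theorem 2, part 1.** If each constraint `g_i` is
`L`-Lipschitz, the initial set `S₀ ⊆ A` is safe, and the lower confidence bounds are
valid on `A`, then every element of every Lipschitz-based safe set `S_n` (`n ≥ 1`)
satisfies all safety constraints. -/
theorem lipschitz_safe_set_safe {d q : ℕ}
    (A : Set (EuclideanSpace ℝ (Fin d))) (hA : A.Finite)
    (g : Fin q → EuclideanSpace ℝ (Fin d) → ℝ) (L : ℝ) (hL : 0 ≤ L)
    (hg : ∀ (i : Fin q) (a a' : EuclideanSpace ℝ (Fin d)),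
      |g i a - g i a'| ≤ L * ‖a - a'‖)
    (S₀ : Set (EuclideanSpace ℝ (Fin d))) (hS₀A : S₀ ⊆ A)
    (hS₀ : ∀ a ∈ S₀, ∀ i : Fin q, g i a ≥ 0)
    (l : ℕ → Fin q → EuclideanSpace ℝ (Fin d) → ℝ)
    (hl : ∀ n : ℕ, 1 ≤ n → ∀ a ∈ A, ∀ i : Fin q, l n i a ≤ g i a) :
    ∀ n : ℕ, 1 ≤ n → ∀ a ∈ safeSet A l L S₀ n, ∀ i : Fin q, g i a ≥ 0 := by
  have key : ∀ n : ℕ, ∀ a ∈ safeSet A l L S₀ n, ∀ i : Fin q, a ∈ A ∧ g i a ≥ 0 := by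
    intro n
    induction n with
    | zero => exact fun a ha i => ⟨hS₀A ha, hS₀ a ha i⟩
    | succ n ih =>
      intro a ha i
      simp only [safeSet, Set.mem_iInter, Set.mem_iUnion, Set.mem_setOf_eq] at ha
      obtain ⟨a₀, ha₀, haA, hle⟩ := ha i
      obtain ⟨ha₀A, hg₀⟩ := ih a₀ ha₀ i
      have h1 : l (n + 1) i a₀ ≤ g i a₀ := hl (n + 1) (Nat.le_add_left 1 n) a₀ ha₀A i
      have h2 : g i a₀ - g i a ≤ L * ‖a₀ - a‖ := (abs_le.mp (hg i a₀ a)).2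
      exact ⟨haA, by linarith⟩
  exact fun n _ a ha i => (key n a ha i).2
end

section
/- Let A be a finite subset of ℝ^d, let L ≥ 0, let S₀ ⊆ A, and let l_n^i : A → ℝ (n ≥ 1, i = 1,…,q) be lower confidence bounds. Suppose the bounds are nondecreasing in n, i.e. l_{n}^i(a) ≥ l_{n−1}^i(a) for all n ≥ 2, all a ∈ A and all i, and suppose l_n^i(a) ≥ 0 for every a ∈ S₀, every n ≥ 1 and every i. Then the Lipschitz-based safe sets form an increasing chain: S_{n−1} ⊆ S_n for all n ≥ 1. -/
/-- **The safe set does not shrink.** If the lower confidence bounds are nondecreasing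
in `n` and nonnegative on the initial safe set `S₀ ⊆ A`, then the Lipschitz-based safe
sets form an increasing chain: `S_{n-1} ⊆ S_n` for all `n ≥ 1`. -/
theorem lipschitz_safe_set_increasing {d q : ℕ}
    (A : Set (EuclideanSpace ℝ (Fin d))) (hA : A.Finite)
    (L : ℝ) (hL : 0 ≤ L)
    (S₀ : Set (EuclideanSpace ℝ (Fin d))) (hS₀A : S₀ ⊆ A)
    (l : ℕ → Fin q → EuclideanSpace ℝ (Fin d) → ℝ)
    (hmono : ∀ n : ℕ, 2 ≤ n → ∀ a ∈ A, ∀ i : Fin q, l (n - 1) i a ≤ l n i a)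
    (hS₀pos : ∀ a ∈ S₀, ∀ n : ℕ, 1 ≤ n → ∀ i : Fin q, l n i a ≥ 0) :
    ∀ n : ℕ, 1 ≤ n → safeSet A l L S₀ (n - 1) ⊆ safeSet A l L S₀ n := by
  intro n hn
  induction n with
  | zero => omega
  | succ n ih =>
    simp only [Nat.add_sub_cancel]
    cases n with
    | zero =>
      intro x hx
      simp only [safeSet, Set.mem_iInter, Set.mem_iUnion, Set.mem_setOf_eq]
      intro i
      refine ⟨x, hx, hS₀A hx, ?_⟩
      have := hS₀pos x hx 1 le_rfl i
      simp only [sub_self, norm_zero]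
      linarith
    | succ m =>
      have ihm : safeSet A l L S₀ m ⊆ safeSet A l L S₀ (m + 1) := by
        have := ih (by omega)
        simpa using this
      intro x hx
      refine Set.mem_iInter.2 fun i => ?_
      have hxi := Set.mem_iInter.1 hx i
      simp only [Set.mem_iUnion, Set.mem_setOf_eq] at hxi
      obtain ⟨a, ha, hxA, hge⟩ := hxi
      refine Set.mem_iUnion₂.2 ⟨a, ihm ha, hxA, ?_⟩
      have haA : a ∈ A := by
        cases m with
        | zero => exact hS₀A ha
        | succ k =>
          simp only [safeSet, Set.mem_iInter, Set.mem_iUnion, Set.mem_setOf_eq] at ha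
          obtain ⟨b, _, hbA, _⟩ := ha i
          exact hbA
      have h := hmono (m + 1 + 1) (by omega) a haA i
      simp only [Nat.add_sub_cancel] at h
      linarith
end

section
/- Let (Ω, 𝓕, P) be a probability space, let A be a finite subset of ℝ^d, let L ≥ 0, let δ ∈ (0,1), suppose each g_i : ℝ^d → ℝ (i = 1,…,q) is L-Lipschitz, and let S₀ ⊆ A be nonempty with g_i(a) ≥ 0 for all a ∈ S₀ and all i. For each n ≥ 1 and i let L_n^i : Ω × A → ℝ be measurable random lower confidence bounds with P( for all n, a, i: L_n^i(ω, a) ≤ g_i(a) ) ≥ 1 − δ, and define the random Lipschitz-based safe sets S_n(ω) := ⋂_{i=1}^q ⋃_{a ∈ S_{n−1}(ω)} { a' ∈ A : L_n^i(ω, a) − L‖a − a'‖ ≥ 0 } with S_0(ω) = S₀. Then for any (possibly random) sequence of evaluated parameters with a_n(ω) ∈ S_n(ω) for all n, one has P( for all n ≥ 1 and all i: g_i(a_n(ω)) ≥ 0 ) ≥ 1 − δ. -/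
open MeasureTheory

/-- **Theorem 2, part 1 (safety of SafeOpt-MC).** If each constraint `g_i` is
`L`-Lipschitz, the nonempty initial set `S₀ ⊆ A` is safe, and the random lower
confidence bounds are simultaneously valid with probability at least `1 - δ`, then any
sequence of evaluated parameters chosen from the random Lipschitz-based safe sets,
`a_n(ω) ∈ S_n(ω)`, satisfies all safety constraints for all iterations with probability
at least `1 - δ`. -/
theorem safeopt_mc_safety
    {Ω : Type*} [MeasurableSpace Ω] (P : Measure Ω) [IsProbabilityMeasure P]
    {d q : ℕ} (A : Set (EuclideanSpace ℝ (Fin d))) (hA : A.Finite)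
    (g : Fin q → EuclideanSpace ℝ (Fin d) → ℝ) (L : ℝ) (hL : 0 ≤ L)
    (δ : ℝ) (hδ : δ ∈ Set.Ioo (0 : ℝ) 1)
    (hg : ∀ (i : Fin q) (a a' : EuclideanSpace ℝ (Fin d)),
      |g i a - g i a'| ≤ L * ‖a - a'‖)
    (S₀ : Set (EuclideanSpace ℝ (Fin d))) (hS₀ne : S₀.Nonempty) (hS₀A : S₀ ⊆ A)
    (hS₀ : ∀ a ∈ S₀, ∀ i : Fin q, g i a ≥ 0)
    (Lcb : ℕ → Fin q → Ω → EuclideanSpace ℝ (Fin d) → ℝ)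
    (hLmeas : ∀ (n : ℕ) (i : Fin q) (a : EuclideanSpace ℝ (Fin d)),
      Measurable (fun ω : Ω => Lcb n i ω a))
    (hLcb : ENNReal.ofReal (1 - δ) ≤
      P {ω : Ω | ∀ n : ℕ, 1 ≤ n → ∀ a ∈ A, ∀ i : Fin q, Lcb n i ω a ≤ g i a})
    (a : ℕ → Ω → EuclideanSpace ℝ (Fin d))
    (ha : ∀ (n : ℕ), 1 ≤ n → ∀ ω : Ω,
      a n ω ∈ safeSet A (fun m i => Lcb m i ω) L S₀ n) :
    ENNReal.ofReal (1 - δ) ≤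
      P {ω : Ω | ∀ n : ℕ, 1 ≤ n → ∀ i : Fin q, g i (a n ω) ≥ 0} := by
  refine le_trans hLcb (P.mono ?_)
  intro ω hω
  simp only [Set.mem_setOf_eq] at hω ⊢
  have key : ∀ (n : ℕ) (i : Fin q) (x : EuclideanSpace ℝ (Fin d)),
      x ∈ safeSet A (fun m i => Lcb m i ω) L S₀ n → x ∈ A ∧ g i x ≥ 0 := by
    intro n
    induction n with
    | zero => intro i x hx; exact ⟨hS₀A hx, hS₀ x hx i⟩
    | succ n ih =>
      intro i x hx
      simp only [safeSet, Set.mem_iInter, Set.mem_iUnion] at hx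
      obtain ⟨b, hb, hxA, hbx⟩ := hx i
      obtain ⟨hbA, hgb⟩ := ih i b hb
      have hlcb : Lcb (n + 1) i ω b ≤ g i b := hω (n + 1) (by omega) b hbA i
      have hlip : g i b - g i x ≤ L * ‖b - x‖ :=
        (abs_le.mp (hg i b x)).2
      refine ⟨hxA, ?_⟩
      have : g i x ≥ Lcb (n + 1) i ω b - L * ‖b - x‖ := by linarith
      linarith
  intro n hn i
  exact (key n i (a n ω) (ha n hn ω)).2
end
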